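/- Let X be a barrelled topological sequence space in which the canonical unit vectors (e_n) form a basis, let (w_n) be a sequence of nonzero scalars, and suppose the weighted backward shift B_w(x_1, x_2, x_3, …) = (w_2 x_2, w_3 x_3, w_4 x_4, …) is a continuous linear operator on X. Then B_w is mixing if and only if (∏_{i=1}^{n} w_i)^{-1} e_n → 0 in X as n → ∞. -/

import Mathlib

/-!
Rescaling the basis to `f n = (w 1 ⋯ w n)⁻¹ • e n` turns `B` into the unweighted backward shift:
`B (f (n + 1)) = f n` and `B (f 0) = 0`. If `f n → 0`, Kitai's criterion applies on the span of
the `f n`, the vectors `f (n + k)` being preimages of `f k` under `B^[n]` that tend to `0`.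

Conversely, barrelledness makes the projections `x ↦ x_n • e n` equicontinuous: for a closed
balanced convex `0`-neighbourhood `D` there is a `0`-neighbourhood `U` with `x_n • e n ∈ D` for
all `x ∈ U` and all `n`. Mixing gives, for each large `n`, some `u ∈ U` with
`1 < |(B^[n] u)_0| = |w 1 ⋯ w n * u_n|`, whence `f n = (w 1 ⋯ w n * u_n)⁻¹ • (u_n • e n) ∈ D`.
-/

open Filter Topology

/-- A continuous map `T` is (topologically) mixing. -/
def Mixing {X : Type*} [TopologicalSpace X] (T : X → X) : Prop :=
  ∀ U V : Set X, IsOpen U → IsOpen V → U.Nonempty → V.Nonempty →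
    ∃ N : ℕ, ∀ n ≥ N, (T^[n] '' U ∩ V).Nonempty

/-- A barrel: a closed, balanced, convex, absorbing set. -/
def IsBarrelS (𝕜 : Type*) {X : Type*} [RCLike 𝕜] [AddCommGroup X] [Module 𝕜 X]
    [TopologicalSpace X] (A : Set X) : Prop :=
  IsClosed A ∧ (∀ t : 𝕜, ‖t‖ ≤ 1 → ∀ a ∈ A, t • a ∈ A) ∧
    (∀ a ∈ A, ∀ b ∈ A, ∀ s t : ℝ, 0 ≤ s → 0 ≤ t → s + t = 1 →
      (s : 𝕜) • a + (t : 𝕜) • b ∈ A) ∧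
    (∀ x : X, ∃ ε > (0 : ℝ), ∀ t : 𝕜, ‖t‖ < ε → t • x ∈ A)

/-- Kitai's criterion. -/
theorem Mixing.of_tendsto_iterate {X F : Type*} [AddCommMonoid X] [TopologicalSpace X]
    [ContinuousAdd X] [FunLike F X X] [AddMonoidHomClass F X X] (T : F) {X₀ Y₀ : Set X}
    (hX₀ : Dense X₀) (hY₀ : Dense Y₀)
    (hT : ∀ x ∈ X₀, Tendsto (fun n => T^[n] x) atTop (𝓝 0))
    (hS : ∀ y ∈ Y₀, ∃ u : ℕ → X, Tendsto u atTop (𝓝 0) ∧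
      Tendsto (fun n => T^[n] (u n)) atTop (𝓝 y)) :
    Mixing T := by
  intro U V hU hV hUne hVne
  obtain ⟨x, hxU, hx⟩ := hX₀.inter_open_nonempty U hU hUne
  obtain ⟨y, hyV, hy⟩ := hY₀.inter_open_nonempty V hV hVne
  obtain ⟨u, hu, hTu⟩ := hS y hy
  have hz : Tendsto (fun n => x + u n) atTop (𝓝 x) := by
    simpa using tendsto_const_nhds.add hu
  have hTz : Tendsto (fun n => T^[n] (x + u n)) atTop (𝓝 y) := by
    simpa [iterate_map_add] using (hT x hx).add hTu
  obtain ⟨N, hN⟩ := eventually_atTop.1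
    ((hz.eventually (hU.mem_nhds hxU)).and (hTz.eventually (hV.mem_nhds hyV)))
  exact ⟨N, fun n hn => ⟨_, Set.mem_image_of_mem _ (hN n hn).1, (hN n hn).2⟩⟩

section Shift

variable {α : Type*} {T : α → α} {f : ℕ → α}

theorem iterate_apply_add_of_apply_succ (h : ∀ k, T (f (k + 1)) = f k) (n k : ℕ) :
    T^[n] (f (n + k)) = f k := by
  induction n with
  | zero => simp
  | succ n ih => rw [Function.iterate_succ_apply, Nat.add_right_comm, h, ih]

theorem iterate_apply_eq_zero_of_lt [Zero α] (hT : T 0 = 0) (h0 : T (f 0) = 0)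
    (h : ∀ k, T (f (k + 1)) = f k) {n k : ℕ} (hk : k < n) : T^[n] (f k) = 0 := by
  obtain ⟨m, rfl⟩ := Nat.exists_eq_add_of_lt hk
  have hk0 : T^[k] (f k) = f 0 := by simpa using iterate_apply_add_of_apply_succ h k 0
  rw [show k + m + 1 = m + (k + 1) by omega, Function.iterate_add_apply,
    Function.iterate_succ_apply', hk0, h0, Function.iterate_fixed hT]

end Shift

theorem Mixing.of_apply_succ_eq_of_tendsto_zero {R X : Type*} [Semiring R] [AddCommMonoid X]
    [Module R X] [TopologicalSpace X] [ContinuousAdd X] [ContinuousConstSMul R X]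
    (T : X →ₗ[R] X) {f : ℕ → X} (h0 : T (f 0) = 0) (h : ∀ k, T (f (k + 1)) = f k)
    (hf : Tendsto f atTop (𝓝 0)) (hdense : Dense (Submodule.span R (Set.range f) : Set X)) :
    Mixing T := by
  refine Mixing.of_tendsto_iterate T hdense hdense (fun x hx => ?_) (fun y hy => ?_)
  · induction hx using Submodule.span_induction with
    | mem _ hx =>
      obtain ⟨k, rfl⟩ := hx
      refine tendsto_const_nhds.congr' ?_
      filter_upwards [eventually_gt_atTop k] with n hn
      exact (iterate_apply_eq_zero_of_lt (map_zero T) h0 h hn).symm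
    | zero => simpa using tendsto_const_nhds
    | add x y _ _ hx hy => simpa using hx.add hy
    | smul a x _ hx => simpa [← Module.End.pow_apply] using hx.const_smul a
  · induction hy using Submodule.span_induction with
    | mem _ hy =>
      obtain ⟨k, rfl⟩ := hy
      refine ⟨fun n => f (n + k), hf.comp (tendsto_add_atTop_nat k), ?_⟩
      simp only [iterate_apply_add_of_apply_succ h]
      exact tendsto_const_nhds
    | zero => exact ⟨0, tendsto_const_nhds, by simpa using tendsto_const_nhds⟩
    | add x y _ _ hx hy =>
      obtain ⟨u, hu, hTu⟩ := hx
      obtain ⟨v, hv, hTv⟩ := hy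
      exact ⟨fun n => u n + v n, by simpa using hu.add hv, by simpa using hTu.add hTv⟩
    | smul a x _ hx =>
      obtain ⟨u, hu, hTu⟩ := hx
      exact ⟨fun n => a • u n, by simpa using hu.const_smul a,
        by simpa [← Module.End.pow_apply] using hTu.const_smul a⟩

section LocallyConvex

variable (𝕜 : Type*) {X : Type*} [RCLike 𝕜] [AddCommGroup X] [Module 𝕜 X]

/-- Convexity with real coefficients, written with `𝕜`-scalars: `X` carries no `ℝ`-module
structure. -/
def RealConvex (C : Set X) : Prop :=
  ∀ a ∈ C, ∀ b ∈ C, ∀ s t : ℝ, 0 ≤ s → 0 ≤ t → s + t = 1 → (s : 𝕜) • a + (t : 𝕜) • b ∈ C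

variable {𝕜}

theorem RealConvex.balancedCore {C : Set X} (hC : RealConvex 𝕜 C) (h0 : (0 : X) ∈ C) :
    RealConvex 𝕜 (balancedCore 𝕜 C) := by
  intro a ha b hb s t hs ht hst
  rw [balancedCore_eq_iInter h0, Set.mem_iInter₂] at ha hb ⊢
  intro r hr
  obtain ⟨a', ha', rfl⟩ := ha r hr
  obtain ⟨b', hb', rfl⟩ := hb r hr
  refine ⟨(s : 𝕜) • a' + (t : 𝕜) • b', hC a' ha' b' hb' s t hs ht hst, ?_⟩
  simp only [smul_add, smul_comm r]

theorem RealConvex.closure [TopologicalSpace X] [ContinuousAdd X] [ContinuousConstSMul 𝕜 X]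
    {C : Set X} (hC : RealConvex 𝕜 C) : RealConvex 𝕜 (closure C) :=
  fun _ ha _ hb s t hs ht hst =>
    map_mem_closure₂' (f := fun a b => (s : 𝕜) • a + (t : 𝕜) • b)
      (fun _ => continuous_const.add (continuous_const_smul _))
      (fun _ => (continuous_const_smul _).add continuous_const) ha hb
      fun a ha b hb => hC a ha b hb s t hs ht hst

theorem RealConvex.setOf_forall_map_mem {Y ι : Type*} [AddCommGroup Y] [Module 𝕜 Y]
    {D : Set Y} (hD : RealConvex 𝕜 D) (P : ι → X →ₗ[𝕜] Y) :
    RealConvex 𝕜 {x | ∀ i, P i x ∈ D} :=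
  fun _ ha _ hb s t hs ht hst i => by simpa using hD _ (ha i) _ (hb i) s t hs ht hst

theorem exists_isClosed_balanced_realConvex_subset [TopologicalSpace X]
    [IsTopologicalAddGroup X] [ContinuousSMul 𝕜 X]
    (hlc : ∀ U ∈ 𝓝 (0 : X), ∃ C ∈ 𝓝 (0 : X), C ⊆ U ∧ RealConvex 𝕜 C)
    {W : Set X} (hW : W ∈ 𝓝 0) :
    ∃ D ∈ 𝓝 (0 : X), D ⊆ W ∧ IsClosed D ∧ Balanced 𝕜 D ∧ RealConvex 𝕜 D := by
  obtain ⟨V, hV, hVc, hVW⟩ := exists_mem_nhds_isClosed_subset hW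
  obtain ⟨C, hC, hCV, hCconv⟩ := hlc V hV
  refine ⟨closure (balancedCore 𝕜 C), mem_of_superset (balancedCore_mem_nhds_zero hC)
    subset_closure, ?_, isClosed_closure, (balancedCore_balanced C).closure,
    (hCconv.balancedCore (mem_of_mem_nhds hC)).closure⟩
  exact (closure_minimal ((balancedCore_subset C).trans hCV) hVc).trans hVW

theorem setOf_forall_map_mem_mem_nhds_of_barrelled {Y ι : Type*} [TopologicalSpace X]
    [AddCommGroup Y] [Module 𝕜 Y] [TopologicalSpace Y]
    (hbarrelled : ∀ A : Set X, IsBarrelS 𝕜 A → A ∈ 𝓝 (0 : X))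
    (P : ι → X →ₗ[𝕜] Y) (hP : ∀ i, Continuous (P i))
    (hbdd : ∀ x, Bornology.IsVonNBounded 𝕜 (Set.range fun i => P i x))
    {D : Set Y} (hD : D ∈ 𝓝 0) (hDc : IsClosed D) (hDb : Balanced 𝕜 D)
    (hDconv : RealConvex 𝕜 D) :
    {x | ∀ i, P i x ∈ D} ∈ 𝓝 0 := by
  refine hbarrelled _ ⟨?_, fun t ht x hx i => ?_, hDconv.setOf_forall_map_mem P, fun x => ?_⟩
  · rw [Set.ofPred_forall]
    exact isClosed_iInter fun i => hDc.preimage (hP i)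
  · simpa using balanced_iff_smul_mem.1 hDb ht (hx i)
  · obtain ⟨ε, hε, hsmul⟩ := Metric.eventually_nhds_iff.1
      ((absorbs_iff_eventually_nhds_zero (mem_of_mem_nhds hD)).1 (hbdd x hD))
    exact ⟨ε, hε, fun t ht i => by simpa using hsmul (by simpa using ht) ⟨i, rfl⟩⟩

end LocallyConvex

theorem tendsto_zero_of_tendsto_sum_range {G : Type*} [AddCommGroup G] [TopologicalSpace G]
    [IsTopologicalAddGroup G] {s : ℕ → G} {x : G}
    (h : Tendsto (fun N => ∑ n ∈ Finset.range N, s n) atTop (𝓝 x)) :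
    Tendsto s atTop (𝓝 0) := by
  simpa [Finset.sum_range_succ] using (h.comp (tendsto_add_atTop_nat 1)).sub h

theorem dense_span_range_of_tendsto_sum {R X : Type*} [Semiring R] [AddCommMonoid X]
    [Module R X] [TopologicalSpace X] {e : ℕ → X}
    (h : ∀ x, ∃ α : ℕ → R, Tendsto (fun N => ∑ n ∈ Finset.range N, α n • e n) atTop (𝓝 x)) :
    Dense (Submodule.span R (Set.range e) : Set X) := fun x => by
  obtain ⟨α, hα⟩ := h x
  exact mem_closure_of_tendsto hα (Eventually.of_forall fun N =>
    Submodule.sum_mem _ fun n _ => Submodule.smul_mem _ _ (Submodule.subset_span ⟨n, rfl⟩))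

def weightProd {M : Type*} [CommMonoid M] (w : ℕ → M) (n : ℕ) : M :=
  ∏ i ∈ Finset.range n, w (i + 1)

theorem weightProd_succ {M : Type*} [CommMonoid M] (w : ℕ → M) (n : ℕ) :
    weightProd w (n + 1) = weightProd w n * w (n + 1) :=
  Finset.prod_range_succ _ _

section SequenceSpace

variable {𝕜 X : Type*} [RCLike 𝕜] [AddCommGroup X] [Module 𝕜 X]
  {ι : X →ₗ[𝕜] (ℕ → 𝕜)} {e : ℕ → X} {w : ℕ → 𝕜} {B : X →ₗ[𝕜] X}

theorem coeff_eq_of_tendsto_sum [TopologicalSpace X] (hι : Continuous ι)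
    (he : ∀ n, ι (e n) = Pi.single n 1) {α : ℕ → 𝕜} {x : X}
    (h : Tendsto (fun N => ∑ n ∈ Finset.range N, α n • e n) atTop (𝓝 x)) : α = ι x := by
  funext m
  refine tendsto_nhds_unique (tendsto_const_nhds.congr' ?_)
    (((continuous_apply m).comp hι).continuousAt.tendsto.comp h)
  filter_upwards [eventually_gt_atTop m] with N hN
  simp [he, Pi.single_apply, hN]

theorem coord_zero_iterate (hB : ∀ x n, ι (B x) n = w (n + 1) * ι x (n + 1)) (n : ℕ) (x : X) :
    ι (B^[n] x) 0 = weightProd w n * ι x n := by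
  induction n generalizing x with
  | zero => simp [weightProd]
  | succ n ih =>
    rw [Function.iterate_succ_apply, ih, hB, weightProd_succ, mul_assoc]

theorem apply_basis_zero (hinj : Function.Injective ι) (he : ∀ n, ι (e n) = Pi.single n 1)
    (hB : ∀ x n, ι (B x) n = w (n + 1) * ι x (n + 1)) : B (e 0) = 0 :=
  hinj <| by funext m; simp [hB, he]

theorem apply_basis_succ (hinj : Function.Injective ι) (he : ∀ n, ι (e n) = Pi.single n 1)
    (hB : ∀ x n, ι (B x) n = w (n + 1) * ι x (n + 1)) (k : ℕ) :
    B (e (k + 1)) = w (k + 1) • e k :=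
  hinj <| by
    funext m
    rw [hB, map_smul]
    rcases eq_or_ne m k with rfl | h <;> simp [*]

theorem apply_inv_weightProd_smul_basis_succ (hinj : Function.Injective ι)
    (he : ∀ n, ι (e n) = Pi.single n 1) (hw : ∀ n, w n ≠ 0)
    (hB : ∀ x n, ι (B x) n = w (n + 1) * ι x (n + 1)) (k : ℕ) :
    B ((weightProd w (k + 1))⁻¹ • e (k + 1)) = (weightProd w k)⁻¹ • e k := by
  rw [map_smul, apply_basis_succ hinj he hB, smul_smul, weightProd_succ, mul_inv, mul_assoc,
    inv_mul_cancel₀ (hw _), mul_one]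

theorem eventually_inv_weightProd_smul_mem_of_mixing [TopologicalSpace X] (hι : Continuous ι)
    (he : ∀ n, ι (e n) = Pi.single n 1) (hB : ∀ x n, ι (B x) n = w (n + 1) * ι x (n + 1))
    (hmix : Mixing B) {D : Set X} (hD : Balanced 𝕜 D)
    (hA : {x | ∀ n, ι x n • e n ∈ D} ∈ 𝓝 0) :
    ∀ᶠ n in atTop, (weightProd w n)⁻¹ • e n ∈ D := by
  have hcoord : Continuous fun y : X => ι y 0 := (continuous_apply 0).comp hι
  obtain ⟨N, hN⟩ := hmix _ {y | 1 < ‖ι y 0‖} isOpen_interior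
    (isOpen_lt continuous_const hcoord.norm) ⟨0, mem_interior_iff_mem_nhds.2 hA⟩
    ⟨(2 : 𝕜) • e 0, by simp [he]⟩
  filter_upwards [eventually_ge_atTop N] with n hn
  obtain ⟨_, ⟨u, huA, rfl⟩, hu⟩ := hN n hn
  replace hu : 1 < ‖weightProd w n * ι u n‖ := coord_zero_iterate hB n u ▸ hu
  have hq : weightProd w n * ι u n ≠ 0 := norm_pos_iff.1 (one_pos.trans hu)
  have hsmul : (weightProd w n)⁻¹ • e n = (weightProd w n * ι u n)⁻¹ • (ι u n • e n) := by
    rw [smul_smul, mul_inv, mul_assoc, inv_mul_cancel₀ (right_ne_zero_of_mul hq), mul_one]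
  rw [hsmul]
  exact balanced_iff_smul_mem.1 hD (by rw [norm_inv]; exact inv_le_one_of_one_le₀ hu.le)
    (interior_subset huA n)

end SequenceSpace

theorem weighted_backward_shift_mixing_iff_general
    {𝕜 : Type*} [RCLike 𝕜] {X : Type*} [AddCommGroup X] [Module 𝕜 X]
    [TopologicalSpace X] [IsTopologicalAddGroup X] [ContinuousSMul 𝕜 X]
    -- X is locally convex:
    (hlc : ∀ U ∈ 𝓝 (0 : X), ∃ C ∈ 𝓝 (0 : X), C ⊆ U ∧
      ∀ a ∈ C, ∀ b ∈ C, ∀ s t : ℝ, 0 ≤ s → 0 ≤ t → s + t = 1 →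
        (s : 𝕜) • a + (t : 𝕜) • b ∈ C)
    -- X is barrelled:
    (hbarrelled : ∀ A : Set X, IsBarrelS 𝕜 A → A ∈ 𝓝 (0 : X))
    (ι : X →ₗ[𝕜] (ℕ → 𝕜)) (hinj : Function.Injective ι) (hι : Continuous ι)
    (e : ℕ → X) (he : ∀ n, ι (e n) = Pi.single n 1)
    (hbasis : ∀ x : X, ∃! α : ℕ → 𝕜,
      Tendsto (fun N => ∑ n ∈ Finset.range N, α n • e n) atTop (𝓝 x))
    (w : ℕ → 𝕜) (hw : ∀ n, w n ≠ 0)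
    (B : X →ₗ[𝕜] X)
    (hB : ∀ x n, ι (B x) n = w (n + 1) * ι x (n + 1))
    :
    Mixing (⇑B) ↔
      Tendsto (fun n => (∏ i ∈ Finset.range n, w (i + 1))⁻¹ • e n) atTop (𝓝 (0 : X)) := by
  have hcoord_smul : ∀ x, Tendsto (fun n => ι x n • e n) atTop (𝓝 0) := fun x => by
    obtain ⟨α, hα, -⟩ := hbasis x
    exact coeff_eq_of_tendsto_sum hι he hα ▸ tendsto_zero_of_tendsto_sum_range hα
  change Mixing B ↔ Tendsto (fun n => (weightProd w n)⁻¹ • e n) atTop (𝓝 0)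
  constructor
  · intro hmix W hW
    obtain ⟨D, hD, hDW, hDc, hDb, hDconv⟩ := exists_isClosed_balanced_realConvex_subset hlc hW
    have hA := setOf_forall_map_mem_mem_nhds_of_barrelled hbarrelled
      (fun n => (LinearMap.proj n ∘ₗ ι).smulRight (e n))
      (fun n => ((continuous_apply n).comp hι).smul continuous_const)
      (fun x => (hcoord_smul x).isVonNBounded_range 𝕜) hD hDc hDb hDconv
    exact (eventually_inv_weightProd_smul_mem_of_mixing hι he hB hmix hDb hA).mono
      fun n hn => hDW hn
  · intro hf
    refine Mixing.of_apply_succ_eq_of_tendsto_zero B (by simp [apply_basis_zero hinj he hB])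
      (apply_inv_weightProd_smul_basis_succ hinj he hw hB) hf
      ((dense_span_range_of_tendsto_sum fun x => (hbasis x).exists).mono
        (Submodule.span_le.2 ?_))
    rintro _ ⟨n, rfl⟩
    rw [← smul_inv_smul₀ (Finset.prod_ne_zero_iff.2 fun i _ => hw (i + 1)) (e n)]
    exact Submodule.smul_mem _ _ (Submodule.subset_span ⟨n, rfl⟩)

/-- If `X` is a barrelled topological sequence space in which the unit vectors form a
basis and the weighted backward shift `B_w` is a continuous linear operator, then `B_w`
is mixing iff `(∏ w_i)⁻¹ • e n → 0`. -/
theorem weighted_backward_shift_mixing_iff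
    {𝕜 : Type*} [RCLike 𝕜] {X : Type*} [AddCommGroup X] [Module 𝕜 X]
    [TopologicalSpace X] [IsTopologicalAddGroup X] [ContinuousSMul 𝕜 X]
    -- X is locally convex:
    (hlc : ∀ U ∈ 𝓝 (0 : X), ∃ C ∈ 𝓝 (0 : X), C ⊆ U ∧
      ∀ a ∈ C, ∀ b ∈ C, ∀ s t : ℝ, 0 ≤ s → 0 ≤ t → s + t = 1 →
        (s : 𝕜) • a + (t : 𝕜) • b ∈ C)
    -- X is barrelled:
    (hbarrelled : ∀ A : Set X, IsBarrelS 𝕜 A → A ∈ 𝓝 (0 : X))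
    (ι : X →ₗ[𝕜] (ℕ → 𝕜)) (hinj : Function.Injective ι) (hι : Continuous ι)
    (e : ℕ → X) (he : ∀ n, ι (e n) = Pi.single n 1)
    (hbasis : ∀ x : X, ∃! α : ℕ → 𝕜,
      Tendsto (fun N => ∑ n ∈ Finset.range N, α n • e n) atTop (𝓝 x))
    (w : ℕ → 𝕜) (hw : ∀ n, w n ≠ 0)
    (B : X →ₗ[𝕜] X) (hBc : Continuous B)
    (hB : ∀ x n, ι (B x) n = w (n + 1) * ι x (n + 1))
    :
    Mixing (⇑B) ↔
      Tendsto (fun n => (∏ i ∈ Finset.range n, w (i + 1))⁻¹ • e n) atTop (𝓝 (0 : X)) :=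
  weighted_backward_shift_mixing_iff_general hlc hbarrelled ι hinj hι e he hbasis w hw B hB
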